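/- Let Π be a CNF theory and M a model of Π. If there exists an atom a ∈ M that does not occur in atom(Π^{nd}_{M←}), then {a} is erasable in M for Π, i.e., M \ {a} is a model of Π. -/

import Mathlib

structure Clause where
  head : Finset ℕ
  body : Finset ℕ
deriving DecidableEq

abbrev Theory := Finset Clause

/-- interpretation I satisfies clause c -/
def satC (I : Finset ℕ) (c : Clause) : Prop :=
  (c.head ∩ I).Nonempty ∨ ¬ c.body ⊆ I

def isModel (T : Theory) (I : Finset ℕ) : Prop := ∀ c ∈ T, satC I c

def isMinModel (T : Theory) (I : Finset ℕ) : Prop :=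
  isModel T I ∧ ∀ J ⊂ I, ¬ isModel T J

def Positive (T : Theory) : Prop := ∀ c ∈ T, c.head.Nonempty

def Horn (T : Theory) : Prop := ∀ c ∈ T, c.head.card = 1

/-- atoms occurring in a theory -/
def atoms (T : Theory) : Finset ℕ := T.biUnion (fun c => c.head ∪ c.body)

/-- c_{X←} : project head on X -/
def projHeadC (c : Clause) (X : Finset ℕ) : Clause := ⟨c.head ∩ X, c.body⟩
/-- c_X : project head and body on X -/
def projC (c : Clause) (X : Finset ℕ) : Clause := ⟨c.head ∩ X, c.body ∩ X⟩

/-- Π_{X←} -/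
def projHeadT (T : Theory) (X : Finset ℕ) : Theory :=
  (T.image (fun c => projHeadC c X)).filter (fun c => c.head.Nonempty)

/-- Π_X -/
def projT (T : Theory) (X : Finset ℕ) : Theory :=
  (T.image (fun c => projC c X)).filter (fun c => c.head.Nonempty)

/-- Π^{nd} : single-head fragment -/
def nd (T : Theory) : Theory := T.filter (fun c => c.head.card = 1)

/-- the steady set of M for Π is the minimal model of Π^{nd}_{M←} -/
def isSteady (T : Theory) (M S : Finset ℕ) : Prop :=
  isMinModel (nd (projHeadT T M)) S

def simpl (T : Theory) (M S : Finset ℕ) : Theory :=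
  T.filter (fun c => c.head ∩ S = ∅ ∧ c.body ⊆ M)

/-- simplified theory of Π w.r.t. M (with steady set S) -/
def simplT (T : Theory) (M S : Finset ℕ) : Theory := projT (simpl T M S) (M \ S)

/-- E erasable in M for T -/
def Erasable (T : Theory) (M E : Finset ℕ) : Prop :=
  E.Nonempty ∧ E ⊆ M ∧ isModel T (M \ E)

def Outbound (T : Theory) (Y Z : Finset ℕ) : Prop :=
  ∃ c ∈ T, (c.head ∩ Z).Nonempty ∧ (c.body ∩ (Y \ Z)).Nonempty ∧
    c.body ∩ Z = ∅ ∧ c.head ∩ (Y \ Z) = ∅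

def Elementary (T : Theory) (Y : Finset ℕ) : Prop :=
  Y.Nonempty ∧ Y ⊆ atoms T ∧ ∀ Z, Z ⊂ Y → Z.Nonempty → Outbound T Y Z

def HEF (T : Theory) : Prop :=
  ∀ c ∈ T, ∀ E, Elementary T E → (E ∩ c.head).card ≤ 1

def DisjunctiveSet (T : Theory) (S : Finset ℕ) : Prop :=
  ∃ c ∈ T, 1 < (c.head ∩ S).card

def SuperElementary (T : Theory) (X : Finset ℕ) : Prop :=
  Elementary T X ∧ ¬ Outbound T (atoms T) X

def posForm (T : Theory) (phi : ℕ) : Theory :=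
  T.filter (fun c => c.head.Nonempty) ∪
  (T.filter (fun c => c.head = ∅)).image (fun c => ⟨{phi}, c.body⟩) ∪
  (atoms T).image (fun a => ⟨{a}, {phi}⟩)

/-!
A clause satisfied by `M` can only lose its satisfaction in `M \ {a}` if `a` is the one atom of
its head inside `M`. But then its head-projection onto `M` is the single-head clause `a ← B`,
which lies in `Π^{nd}_{M←}` and so puts `a` among its atoms.
-/

lemma satC_sdiff_singleton {I : Finset ℕ} {c : Clause} {a : ℕ} (h : satC I c)
    (hhead : c.head ∩ I ≠ {a}) : satC (I \ {a}) c := by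
  rcases h with hHead | hBody
  · left
    have hnot : ¬ c.head ∩ I ⊆ {a} := by
      rw [Finset.subset_singleton_iff]
      exact not_or.2 ⟨hHead.ne_empty, hhead⟩
    simpa only [← Finset.inter_sdiff_assoc] using Finset.sdiff_nonempty.2 hnot
  · exact Or.inr fun hsub => hBody (hsub.trans Finset.sdiff_subset)

lemma head_subset_atoms {T : Theory} {c : Clause} (hc : c ∈ T) : c.head ⊆ atoms T :=
  fun _ hx => Finset.mem_biUnion.2 ⟨c, hc, Finset.mem_union_left _ hx⟩

lemma projHeadC_mem_nd_projHeadT {T : Theory} {M : Finset ℕ} {c : Clause} (hc : c ∈ T)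
    (hcard : (c.head ∩ M).card = 1) : projHeadC c M ∈ nd (projHeadT T M) := by
  have hne : (c.head ∩ M).Nonempty := Finset.card_pos.1 (by omega)
  simp only [nd, projHeadT, Finset.mem_filter, Finset.mem_image]
  exact ⟨⟨⟨c, hc, rfl⟩, hne⟩, hcard⟩

lemma head_inter_subset_atoms_nd_projHeadT {T : Theory} {M : Finset ℕ} {c : Clause} (hc : c ∈ T)
    (hcard : (c.head ∩ M).card = 1) : c.head ∩ M ⊆ atoms (nd (projHeadT T M)) :=
  head_subset_atoms (projHeadC_mem_nd_projHeadT hc hcard)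

theorem stmt15_general (T : Theory) (M : Finset ℕ) (hM : isModel T M) (a : ℕ)
    (hna : a ∉ atoms (nd (projHeadT T M))) :
    isModel T (M \ {a}) := by
  intro c hc
  refine satC_sdiff_singleton (hM c hc) fun hhead => hna ?_
  have hcard : (c.head ∩ M).card = 1 := by rw [hhead, Finset.card_singleton]
  exact head_inter_subset_atoms_nd_projHeadT hc hcard (hhead ▸ Finset.mem_singleton_self a)

theorem stmt15 (T : Theory) (M : Finset ℕ) (hM : isModel T M) (a : ℕ)
    (ha : a ∈ M) (hna : a ∉ atoms (nd (projHeadT T M))) :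
    isModel T (M \ {a}) :=
  stmt15_general T M hM a hna
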